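/- arXiv:2003.05749 — 2 statements merged into one kernel-verified Lean document; each statement's English description precedes it below -/
import Mathlib

section
/- Let α, β, γ ∈ ℝ. Then (𝔤₃, g, J) is a first kind algebraic Wanas soliton associated to the canonical connection ∇⁰ if and only if one of the following holds: (i) α ≠ 0, β ≠ 0, γ = 0, c = (α−β)²/2, with De₁ = −((α−β)²/2)e₁, De₂ = −((α−β)²/2)e₂, De₃ = 0; (ii) α = β = γ = 0, with D = −c·Id; (iii) α = β = 0, γ ≠ 0, c = −γ²/2, with D = 0; (iv) α = γ = 0, β ≠ 0, c = β²/2, with De₁ = −(β²/2)e₁, De₂ = −(β²/2)e₂, De₃ = 0; (v) α = 0, β ≠ 0, γ ≠ 0, β = γ, c = −2β², with De₁ = 0, De₂ = 2β²e₂, De₃ = 2β²e₃; (vi) α ≠ 0, β = γ = 0, c = α²/2, with De₁ = −(α²/2)e₁, De₂ = −(α²/2)e₂, De₃ = 0; (vii) α ≠ 0, β = 0, γ ≠ 0, α = γ, c = −2α², with De₁ = 2α²e₁, De₂ = 0, De₃ = 2α²e₃. -/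
noncomputable section

/-- The underlying vector space `ℝ³`. -/
abbrev V : Type := Fin 3 → ℝ

/-- The basis vector `e₁`. -/
def e1 : V := ![1, 0, 0]

/-- The basis vector `e₂`. -/
def e2 : V := ![0, 1, 0]

/-- The basis vector `e₃`. -/
def e3 : V := ![0, 0, 1]

/-- The Lorentzian metric `g` with `g(e₁,e₁) = g(e₂,e₂) = 1`, `g(e₃,e₃) = -1`. -/
def g (x y : V) : ℝ := x 0 * y 0 + x 1 * y 1 - x 2 * y 2

/-- The Lie bracket. -/
def br (α β γ : ℝ) (x y : V) : V :=
  (x 0 * y 1 - x 1 * y 0) • (-(γ • e3)) + (x 0 * y 2 - x 2 * y 0) • (-(β • e2)) +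
    (x 1 * y 2 - x 2 * y 1) • (α • e1)

/-- The canonical connection `∇⁰`. -/
def nab (α β γ : ℝ) (x y : V) : V :=
  (x 2 * y 0) • (((α + β - γ) / 2) • e2) + (x 2 * y 1) • (-(((α + β - γ) / 2) • e1))

/-- The torsion `T⁰(X,Y) = ∇⁰_X Y - ∇⁰_Y X - [X,Y]`. -/
def T (α β γ : ℝ) (x y : V) : V := nab α β γ x y - nab α β γ y x - br α β γ x y

/-- The tensor `A⁰(X,Y)Z = T⁰(T⁰(X,Y),Z)`. -/
def A (α β γ : ℝ) (x y z : V) : V := T α β γ (T α β γ x y) z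

/-- The curvature `R⁰(X,Y)Z = ∇⁰_X ∇⁰_Y Z - ∇⁰_Y ∇⁰_X Z - ∇⁰_{[X,Y]} Z`. -/
def Rc (α β γ : ℝ) (x y z : V) : V :=
  nab α β γ x (nab α β γ y z) - nab α β γ y (nab α β γ x z) - nab α β γ (br α β γ x y) z

/-- The Wanas tensor `W⁰(X,Y)Z = R⁰(X,Y)Z - A⁰(X,Y)Z`. -/
def W (α β γ : ℝ) (x y z : V) : V := Rc α β γ x y z - A α β γ x y z

/-- `w⁰(X,Y) = -g(W⁰(X,e₁)Y,e₁) - g(W⁰(X,e₂)Y,e₂) + g(W⁰(X,e₃)Y,e₃)`. -/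
def w (α β γ : ℝ) (x y : V) : ℝ :=
  -g (W α β γ x e1 y) e1 - g (W α β γ x e2 y) e2 + g (W α β γ x e3 y) e3

/-- `w̃⁰(X,Y) = (w⁰(X,Y) + w⁰(Y,X))/2`. -/
def wt (α β γ : ℝ) (x y : V) : ℝ := (w α β γ x y + w α β γ y x) / 2

/-- `D` is a derivation of the Lie algebra. -/
def IsDeriv (α β γ : ℝ) (D : V →ₗ[ℝ] V) : Prop :=
  ∀ x y, D (br α β γ x y) = br α β γ (D x) y + br α β γ x (D y)

lemma decomp (x : V) : x = x 0 • e1 + x 1 • e2 + x 2 • e3 := by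
  funext i; fin_cases i <;> simp [e1, e2, e3]

lemma Dform (D : V →ₗ[ℝ] V) (d1 d2 d3 : ℝ) (h1 : D e1 = d1 • e1)
    (h2 : D e2 = d2 • e2) (h3 : D e3 = d3 • e3) (v : V) :
    D v = ![d1 * v 0, d2 * v 1, d3 * v 2] := by
  conv_lhs => rw [decomp v]
  rw [map_add, map_add, map_smul, map_smul, map_smul, h1, h2, h3]
  funext i; fin_cases i <;> simp [e1, e2, e3] <;> ring

lemma wan_vals (α β γ : ℝ) (Wan : V →ₗ[ℝ] V) (hWan : ∀ x y, w α β γ x y = g (Wan x) y) :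
    Wan e1 = (γ * (α - 3*β - γ) / 2) • e1 ∧ Wan e2 = (γ * (β - 3*α - γ) / 2) • e2 ∧
      Wan e3 = ((α - β)^2 / 2 - γ^2 / 2) • e3 := by
  have k : ∀ x : V, g x e1 = x 0 ∧ g x e2 = x 1 ∧ g x e3 = -(x 2) := by
    intro x; refine ⟨?_, ?_, ?_⟩ <;> simp [g, e1, e2, e3]
  refine ⟨?_, ?_, ?_⟩ <;> funext i <;> fin_cases i
  · show Wan e1 0 = _
    rw [← (k (Wan e1)).1, ← hWan e1 e1]
    simp [w, W, Rc, A, T, nab, br, g, e1, e2, e3]; ring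
  · show Wan e1 1 = _
    rw [← (k (Wan e1)).2.1, ← hWan e1 e2]
    simp [w, W, Rc, A, T, nab, br, g, e1, e2, e3]
  · show Wan e1 2 = _
    rw [show Wan e1 2 = -(-(Wan e1 2)) by ring, ← (k (Wan e1)).2.2, ← hWan e1 e3]
    simp [w, W, Rc, A, T, nab, br, g, e1, e2, e3]
  · show Wan e2 0 = _
    rw [← (k (Wan e2)).1, ← hWan e2 e1]
    simp [w, W, Rc, A, T, nab, br, g, e1, e2, e3]
  · show Wan e2 1 = _
    rw [← (k (Wan e2)).2.1, ← hWan e2 e2]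
    simp [w, W, Rc, A, T, nab, br, g, e1, e2, e3]; ring
  · show Wan e2 2 = _
    rw [show Wan e2 2 = -(-(Wan e2 2)) by ring, ← (k (Wan e2)).2.2, ← hWan e2 e3]
    simp [w, W, Rc, A, T, nab, br, g, e1, e2, e3]
  · show Wan e3 0 = _
    rw [← (k (Wan e3)).1, ← hWan e3 e1]
    simp [w, W, Rc, A, T, nab, br, g, e1, e2, e3]
  · show Wan e3 1 = _
    rw [← (k (Wan e3)).2.1, ← hWan e3 e2]
    simp [w, W, Rc, A, T, nab, br, g, e1, e2, e3]
  · show Wan e3 2 = _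
    rw [show Wan e3 2 = -(-(Wan e3 2)) by ring, ← (k (Wan e3)).2.2, ← hWan e3 e3]
    simp [w, W, Rc, A, T, nab, br, g, e1, e2, e3]; ring

lemma deriv_iff (α β γ : ℝ) (D : V →ₗ[ℝ] V) (d1 d2 d3 : ℝ) (h1 : D e1 = d1 • e1)
    (h2 : D e2 = d2 • e2) (h3 : D e3 = d3 • e3) :
    IsDeriv α β γ D ↔
      γ * (d1 + d2 - d3) = 0 ∧ β * (d1 + d3 - d2) = 0 ∧ α * (d2 + d3 - d1) = 0 := by
  have DF := Dform D d1 d2 d3 h1 h2 h3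
  constructor
  · intro hD
    refine ⟨?_, ?_, ?_⟩
    · have h := congrFun (hD e1 e2) 2
      simp [DF, br, e1, e2, e3] at h; linear_combination h
    · have h := congrFun (hD e1 e3) 1
      simp [DF, br, e1, e2, e3] at h; linear_combination h
    · have h := congrFun (hD e2 e3) 0
      simp [DF, br, e1, e2, e3] at h; linear_combination -h
  · rintro ⟨hg, hb, ha⟩ x y
    rw [DF, DF, DF]
    funext i; fin_cases i <;> simp [br, e1, e2, e3] <;> ring_nf
    · linear_combination (-(x 1 * y 2 - x 2 * y 1)) * ha
    · linear_combination (x 0 * y 2 - x 2 * y 0) * hb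
    · linear_combination (x 0 * y 1 - x 1 * y 0) * hg

lemma soliton_iff (α β γ c : ℝ) (Wan D : V →ₗ[ℝ] V)
    (hWan : ∀ x y, w α β γ x y = g (Wan x) y) :
    (∀ x, Wan x = c • x + D x) ↔
      (D e1 = (γ * (α - 3*β - γ) / 2 - c) • e1 ∧ D e2 = (γ * (β - 3*α - γ) / 2 - c) • e2 ∧
        D e3 = ((α - β)^2 / 2 - γ^2 / 2 - c) • e3) := by
  obtain ⟨w1, w2, w3⟩ := wan_vals α β γ Wan hWan
  constructor
  · intro h
    refine ⟨?_, ?_, ?_⟩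
    · have := h e1; rw [w1] at this; rw [sub_smul, this]; abel
    · have := h e2; rw [w2] at this; rw [sub_smul, this]; abel
    · have := h e3; rw [w3] at this; rw [sub_smul, this]; abel
  · rintro ⟨h1, h2, h3⟩ x
    rw [Dform D _ _ _ h1 h2 h3, Dform Wan _ _ _ w1 w2 w3]
    funext i; fin_cases i <;> simp <;> ring
theorem g3_first_kind_algebraic_Wanas_soliton (α β γ : ℝ)
    (Wan : V →ₗ[ℝ] V) (hWan : ∀ x y, w α β γ x y = g (Wan x) y)
    (c : ℝ) (D : V →ₗ[ℝ] V) :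
    (IsDeriv α β γ D ∧ ∀ x, Wan x = c • x + D x) ↔
      (α ≠ 0 ∧ β ≠ 0 ∧ γ = 0 ∧ c = (α - β) ^ 2 / 2 ∧
        D e1 = (-((α - β) ^ 2 / 2)) • e1 ∧ D e2 = (-((α - β) ^ 2 / 2)) • e2 ∧ D e3 = 0) ∨
      (α = 0 ∧ β = 0 ∧ γ = 0 ∧
        D e1 = (-c) • e1 ∧ D e2 = (-c) • e2 ∧ D e3 = (-c) • e3) ∨
      (α = 0 ∧ β = 0 ∧ γ ≠ 0 ∧ c = -(γ ^ 2 / 2) ∧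
        D e1 = 0 ∧ D e2 = 0 ∧ D e3 = 0) ∨
      (α = 0 ∧ γ = 0 ∧ β ≠ 0 ∧ c = β ^ 2 / 2 ∧
        D e1 = (-(β ^ 2 / 2)) • e1 ∧ D e2 = (-(β ^ 2 / 2)) • e2 ∧ D e3 = 0) ∨
      (α = 0 ∧ β ≠ 0 ∧ γ ≠ 0 ∧ β = γ ∧ c = -(2 * β ^ 2) ∧
        D e1 = 0 ∧ D e2 = (2 * β ^ 2) • e2 ∧ D e3 = (2 * β ^ 2) • e3) ∨
      (α ≠ 0 ∧ β = 0 ∧ γ = 0 ∧ c = α ^ 2 / 2 ∧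
        D e1 = (-(α ^ 2 / 2)) • e1 ∧ D e2 = (-(α ^ 2 / 2)) • e2 ∧ D e3 = 0) ∨
      (α ≠ 0 ∧ β = 0 ∧ γ ≠ 0 ∧ α = γ ∧ c = -(2 * α ^ 2) ∧
        D e1 = (2 * α ^ 2) • e1 ∧ D e2 = 0 ∧ D e3 = (2 * α ^ 2) • e3) := by
  constructor
  · rintro ⟨hDer, hSol⟩
    rw [soliton_iff α β γ c Wan D hWan] at hSol
    obtain ⟨h1, h2, h3⟩ := hSol
    rw [deriv_iff α β γ D _ _ _ h1 h2 h3] at hDer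
    obtain ⟨Hg, Hb, Ha⟩ := hDer
    by_cases ha : α = 0 <;> by_cases hb : β = 0 <;> by_cases hg : γ = 0
    · -- α = β = γ = 0 : case (ii)
      subst ha hb hg
      refine Or.inr (Or.inl ⟨rfl, rfl, rfl, ?_, ?_, ?_⟩)
      · rw [h1]; module
      · rw [h2]; module
      · rw [h3]; module
    · -- α = β = 0, γ ≠ 0 : case (iii)
      subst ha hb
      have e := (mul_eq_zero.mp Hg).resolve_left hg
      have hc : c = -(γ ^ 2 / 2) := by ring_nf at e ⊢; linarith
      refine Or.inr (Or.inr (Or.inl ⟨rfl, rfl, hg, hc, ?_, ?_, ?_⟩))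
      · rw [h1, hc]; module
      · rw [h2, hc]; module
      · rw [h3, hc]; module
    · -- α = 0, β ≠ 0, γ = 0 : case (iv)
      subst ha hg
      have e := (mul_eq_zero.mp Hb).resolve_left hb
      have hc : c = β ^ 2 / 2 := by ring_nf at e ⊢; linarith
      refine Or.inr (Or.inr (Or.inr (Or.inl ⟨rfl, rfl, hb, hc, ?_, ?_, ?_⟩)))
      · rw [h1, hc]; module
      · rw [h2, hc]; module
      · rw [h3, hc]; module
    · -- α = 0, β ≠ 0, γ ≠ 0 : case (v)
      subst ha
      have eg := (mul_eq_zero.mp Hg).resolve_left hg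
      have eb := (mul_eq_zero.mp Hb).resolve_left hb
      have k : β * (β - γ) = 0 := by linear_combination eb - eg
      have hbg : β = γ := by
        have := (mul_eq_zero.mp k).resolve_left hb; linarith
      rw [← hbg] at eg
      have hc : c = -(2 * β ^ 2) := by ring_nf at eg ⊢; linarith
      refine Or.inr (Or.inr (Or.inr (Or.inr (Or.inl ⟨rfl, hb, hg, hbg, hc, ?_, ?_, ?_⟩))))
      · rw [h1, hc, ← hbg]; module
      · rw [h2, hc, ← hbg]; module
      · rw [h3, hc, ← hbg]; module
    · -- α ≠ 0, β = γ = 0 : case (vi)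
      subst hb hg
      have e := (mul_eq_zero.mp Ha).resolve_left ha
      have hc : c = α ^ 2 / 2 := by ring_nf at e ⊢; linarith
      refine Or.inr (Or.inr (Or.inr (Or.inr (Or.inr (Or.inl ⟨ha, rfl, rfl, hc, ?_, ?_, ?_⟩)))))
      · rw [h1, hc]; module
      · rw [h2, hc]; module
      · rw [h3, hc]; module
    · -- α ≠ 0, β = 0, γ ≠ 0 : case (vii)
      subst hb
      have eg := (mul_eq_zero.mp Hg).resolve_left hg
      have ea := (mul_eq_zero.mp Ha).resolve_left ha
      have k : α * (α - γ) = 0 := by linear_combination ea - eg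
      have hag : α = γ := by
        have := (mul_eq_zero.mp k).resolve_left ha; linarith
      rw [← hag] at eg
      have hc : c = -(2 * α ^ 2) := by ring_nf at eg ⊢; linarith
      refine Or.inr (Or.inr (Or.inr (Or.inr (Or.inr (Or.inr ⟨ha, rfl, hg, hag, hc, ?_, ?_, ?_⟩)))))
      · rw [h1, hc, ← hag]; module
      · rw [h2, hc, ← hag]; module
      · rw [h3, hc, ← hag]; module
    · -- α ≠ 0, β ≠ 0, γ = 0 : case (i)
      subst hg
      have e := (mul_eq_zero.mp Hb).resolve_left hb
      have hc : c = (α - β) ^ 2 / 2 := by ring_nf at e ⊢; linarith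
      refine Or.inl ⟨ha, hb, rfl, hc, ?_, ?_, ?_⟩
      · rw [h1, hc]; module
      · rw [h2, hc]; module
      · rw [h3, hc]; module
    · -- α ≠ 0, β ≠ 0, γ ≠ 0 : impossible
      exfalso
      have eg := (mul_eq_zero.mp Hg).resolve_left hg
      have eb := (mul_eq_zero.mp Hb).resolve_left hb
      have ea := (mul_eq_zero.mp Ha).resolve_left ha
      have k1 : γ * (β - α) = 0 := by linear_combination (ea - eb) / 4
      have hba : β = α := by
        have := (mul_eq_zero.mp k1).resolve_left hg; linarith
      rw [hba] at eg eb
      have k2 : α * γ = 0 := by linear_combination -(eg - eb) / 2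
      rcases mul_eq_zero.mp k2 with h | h
      · exact ha h
      · exact hg h
  · intro h
    rcases h with ⟨ha, hb, hg, hc, hd1, hd2, hd3⟩ | ⟨ha, hb, hg, hd1, hd2, hd3⟩ |
      ⟨ha, hb, hg, hc, hd1, hd2, hd3⟩ | ⟨ha, hg, hb, hc, hd1, hd2, hd3⟩ |
      ⟨ha, hb, hg, hbg, hc, hd1, hd2, hd3⟩ | ⟨ha, hb, hg, hc, hd1, hd2, hd3⟩ |
      ⟨ha, hb, hg, hag, hc, hd1, hd2, hd3⟩
    · -- case (i): α ≠ 0, β ≠ 0, γ = 0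
      have h1' : D e1 = (γ * (α - 3*β - γ) / 2 - c) • e1 := by rw [hd1, hc, hg]; module
      have h2' : D e2 = (γ * (β - 3*α - γ) / 2 - c) • e2 := by rw [hd2, hc, hg]; module
      have h3' : D e3 = ((α - β)^2 / 2 - γ^2 / 2 - c) • e3 := by rw [hd3, hc, hg]; module
      exact ⟨(deriv_iff α β γ D _ _ _ h1' h2' h3').mpr
        ⟨by rw [hg]; ring, by rw [hc, hg]; ring, by rw [hc, hg]; ring⟩,
        (soliton_iff α β γ c Wan D hWan).mpr ⟨h1', h2', h3'⟩⟩
    · -- case (ii): α = β = γ = 0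
      have h1' : D e1 = (γ * (α - 3*β - γ) / 2 - c) • e1 := by rw [hd1, hg]; module
      have h2' : D e2 = (γ * (β - 3*α - γ) / 2 - c) • e2 := by rw [hd2, hg]; module
      have h3' : D e3 = ((α - β)^2 / 2 - γ^2 / 2 - c) • e3 := by rw [hd3, ha, hb, hg]; module
      exact ⟨(deriv_iff α β γ D _ _ _ h1' h2' h3').mpr
        ⟨by rw [hg]; ring, by rw [hb]; ring, by rw [ha]; ring⟩,
        (soliton_iff α β γ c Wan D hWan).mpr ⟨h1', h2', h3'⟩⟩
    · -- case (iii): α = β = 0, γ ≠ 0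
      have h1' : D e1 = (γ * (α - 3*β - γ) / 2 - c) • e1 := by rw [hd1, hc, ha, hb]; module
      have h2' : D e2 = (γ * (β - 3*α - γ) / 2 - c) • e2 := by rw [hd2, hc, ha, hb]; module
      have h3' : D e3 = ((α - β)^2 / 2 - γ^2 / 2 - c) • e3 := by rw [hd3, hc, ha, hb]; module
      exact ⟨(deriv_iff α β γ D _ _ _ h1' h2' h3').mpr
        ⟨by rw [hc, ha, hb]; ring, by rw [hb]; ring, by rw [ha]; ring⟩,
        (soliton_iff α β γ c Wan D hWan).mpr ⟨h1', h2', h3'⟩⟩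
    · -- case (iv): α = 0, γ = 0, β ≠ 0
      have h1' : D e1 = (γ * (α - 3*β - γ) / 2 - c) • e1 := by rw [hd1, hc, hg]; module
      have h2' : D e2 = (γ * (β - 3*α - γ) / 2 - c) • e2 := by rw [hd2, hc, hg]; module
      have h3' : D e3 = ((α - β)^2 / 2 - γ^2 / 2 - c) • e3 := by rw [hd3, hc, ha, hg]; module
      exact ⟨(deriv_iff α β γ D _ _ _ h1' h2' h3').mpr
        ⟨by rw [hg]; ring, by rw [hc, ha, hg]; ring, by rw [ha]; ring⟩,
        (soliton_iff α β γ c Wan D hWan).mpr ⟨h1', h2', h3'⟩⟩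
    · -- case (v): α = 0, β ≠ 0, γ ≠ 0, β = γ
      have h1' : D e1 = (γ * (α - 3*β - γ) / 2 - c) • e1 := by
        rw [hd1, hc, ha, ← hbg]; module
      have h2' : D e2 = (γ * (β - 3*α - γ) / 2 - c) • e2 := by
        rw [hd2, hc, ha, ← hbg]; module
      have h3' : D e3 = ((α - β)^2 / 2 - γ^2 / 2 - c) • e3 := by
        rw [hd3, hc, ha, ← hbg]; module
      exact ⟨(deriv_iff α β γ D _ _ _ h1' h2' h3').mpr
        ⟨by rw [hc, ha, ← hbg]; ring, by rw [hc, ha, ← hbg]; ring, by rw [ha]; ring⟩,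
        (soliton_iff α β γ c Wan D hWan).mpr ⟨h1', h2', h3'⟩⟩
    · -- case (vi): α ≠ 0, β = γ = 0
      have h1' : D e1 = (γ * (α - 3*β - γ) / 2 - c) • e1 := by rw [hd1, hc, hg]; module
      have h2' : D e2 = (γ * (β - 3*α - γ) / 2 - c) • e2 := by rw [hd2, hc, hg]; module
      have h3' : D e3 = ((α - β)^2 / 2 - γ^2 / 2 - c) • e3 := by rw [hd3, hc, hb, hg]; module
      exact ⟨(deriv_iff α β γ D _ _ _ h1' h2' h3').mpr
        ⟨by rw [hg]; ring, by rw [hb]; ring, by rw [hc, hb, hg]; ring⟩,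
        (soliton_iff α β γ c Wan D hWan).mpr ⟨h1', h2', h3'⟩⟩
    · -- case (vii): α ≠ 0, β = 0, γ ≠ 0, α = γ
      have h1' : D e1 = (γ * (α - 3*β - γ) / 2 - c) • e1 := by
        rw [hd1, hc, hb, ← hag]; module
      have h2' : D e2 = (γ * (β - 3*α - γ) / 2 - c) • e2 := by
        rw [hd2, hc, hb, ← hag]; module
      have h3' : D e3 = ((α - β)^2 / 2 - γ^2 / 2 - c) • e3 := by
        rw [hd3, hc, hb, ← hag]; module
      exact ⟨(deriv_iff α β γ D _ _ _ h1' h2' h3').mpr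
        ⟨by rw [hc, hb, ← hag]; ring, by rw [hb]; ring, by rw [hc, hb, ← hag]; ring⟩,
        (soliton_iff α β γ c Wan D hWan).mpr ⟨h1', h2', h3'⟩⟩
end
end

section
/- Let α, β, γ ∈ ℝ. For (𝔤₃, g, J), the bilinear form w⁰ is symmetric, so that W̃an⁰ = Wan⁰; consequently, (𝔤₃, g, J) is a first kind algebraic Wanas soliton associated to the canonical connection ∇⁰ if and only if it is a second kind algebraic Wanas soliton associated to ∇⁰. -/
noncomputable section

theorem g3_first_kind_iff_second_kind (α β γ : ℝ)
    (Wan tWan : V →ₗ[ℝ] V)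
    (hWan : ∀ x y, w α β γ x y = g (Wan x) y)
    (htWan : ∀ x y, wt α β γ x y = g (tWan x) y) :
    (∀ x y, w α β γ x y = w α β γ y x) ∧ tWan = Wan ∧
      ((∃ (c : ℝ) (D : V →ₗ[ℝ] V), IsDeriv α β γ D ∧ ∀ x, Wan x = c • x + D x) ↔
        (∃ (c : ℝ) (D : V →ₗ[ℝ] V), IsDeriv α β γ D ∧ ∀ x, tWan x = c • x + D x)) := by

  have hsym : ∀ x y, w α β γ x y = w α β γ y x := by
    intro x y
    simp only [w, W, Rc, A, T, nab, br, g, e1, e2, e3, Pi.add_apply, Pi.sub_apply,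
      Pi.smul_apply, Pi.neg_apply, smul_eq_mul, Matrix.cons_val_zero, Matrix.cons_val_one,
      Matrix.head_cons, Matrix.cons_val_two, Matrix.tail_cons]
    ring
  have heq : tWan = Wan := by
    apply LinearMap.ext
    intro x
    have hg : ∀ y, g (tWan x) y = g (Wan x) y := by
      intro y
      rw [← hWan, ← htWan, wt, hsym y x]
      ring
    funext i
    fin_cases i
    · have := hg e1; simpa [g, e1, Matrix.cons_val_zero, Matrix.cons_val_one,
        Matrix.head_cons] using this
    · have := hg e2; simpa [g, e2, Matrix.cons_val_zero, Matrix.cons_val_one,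
        Matrix.head_cons] using this
    · have h := hg e3
      simp only [g, e3, Matrix.cons_val_zero, Matrix.cons_val_one, Matrix.head_cons,
        Matrix.cons_val_two, Matrix.tail_cons, mul_zero, mul_one, zero_add, add_zero] at h
      show tWan x 2 = Wan x 2
      linarith
  exact ⟨hsym, heq, by rw [heq]⟩
end
end
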